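/- Let k ≥ 0 be an integer, 0 ≤ α < 1, and let V : ℝ → ℝ be (k+1)-times continuously differentiable with V(u) = 0 for |u| ≥ 1; set V* = sup_{|a|≤1} |V^{(k+1)}(a)|. Let m ≥ 1 be an integer, h = 1/(2m), a_j = (2j−1)/(2m), δ > 0, and let z = (z_1,…,z_m) ∈ ℝ^m with |z_j| ≤ δ for all j. Define S_z(t) = Σ_{j=1}^m z_j V((t−a_j)/h). Then for all s, t ∈ [0,1], |S_z^{(k)}(t) − S_z^{(k)}(s)| ≤ 2^{2+k} δ V* m^{k+α} |t−s|^α. -/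

import Mathlib

/-!
After the substitution `u = 2m t - (2j - 1)` the bumps `V ((t - a j) / h)` have pairwise disjoint
supports, so at every point at most one of them contributes to a derivative of `S_z`:
`|S_z^{(n)}| ≤ (2m)^n δ sup |V^{(n)}|`. Both `V^{(k+1)}` and `V^{(k)}` are bounded by `V*`, the latter
by the mean value theorem since `V^{(k)}` vanishes at `±1`. Hence `S_z^{(k)}` is bounded by
`B = (2m)^k δ V*` and is `2mB`-Lipschitz, and `min (2mB|t - s|, 2B) ≤ 2B (m|t - s|)^α`.
-/

open Finset

lemma iteratedDeriv_eq_zero_of_eqOn_zero {𝕜 F : Type*} [NontriviallyNormedField 𝕜]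
    [NormedAddCommGroup F] [NormedSpace 𝕜 F] {f : 𝕜 → F} {n : ℕ} {s : Set 𝕜} {x : 𝕜}
    (hf : ContDiff 𝕜 n f) (hs : UniqueDiffOn 𝕜 s) (hf0 : Set.EqOn f 0 s) (hx : x ∈ s) :
    iteratedDeriv n f x = 0 := by
  rw [← iteratedDerivWithin_eq_iteratedDeriv hs hf.contDiffAt hx,
    iteratedDerivWithin_congr hf0 hx]
  simp

lemma iteratedDeriv_eq_zero_of_one_le_abs {g : ℝ → ℝ} {n : ℕ} (hg : ContDiff ℝ n g)
    (hg0 : ∀ u, 1 ≤ |u| → g u = 0) {u : ℝ} (hu : 1 ≤ |u|) : iteratedDeriv n g u = 0 := by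
  rcases le_abs'.mp hu with hu | hu
  · exact iteratedDeriv_eq_zero_of_eqOn_zero hg (uniqueDiffOn_Iic (-1))
      (fun x hx => hg0 x (le_abs'.mpr (Or.inl hx))) hu
  · exact iteratedDeriv_eq_zero_of_eqOn_zero hg (uniqueDiffOn_Ici 1)
      (fun x hx => hg0 x (le_abs'.mpr (Or.inr hx))) hu

lemma abs_le_sSup_image_Icc {g : ℝ → ℝ} (hg : Continuous g) (hg0 : ∀ u, 1 ≤ |u| → g u = 0)
    (u : ℝ) : |g u| ≤ sSup ((fun a => |g a|) '' Set.Icc (-1 : ℝ) 1) := by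
  have hbdd : BddAbove ((fun a => |g a|) '' Set.Icc (-1 : ℝ) 1) :=
    (isCompact_Icc.image (continuous_abs.comp hg)).bddAbove
  by_cases hu : 1 ≤ |u|
  · rw [hg0 u hu, abs_zero]
    exact (abs_nonneg (g 0)).trans (le_csSup hbdd ⟨0, by norm_num, rfl⟩)
  · exact le_csSup hbdd ⟨u, abs_le.mp (not_le.mp hu).le, rfl⟩

lemma abs_sub_le_of_abs_deriv_le {f : ℝ → ℝ} {C : ℝ} (hf : Differentiable ℝ f)
    (hC : ∀ x, |deriv f x| ≤ C) (x y : ℝ) : |f y - f x| ≤ C * |y - x| := by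
  simpa only [Real.norm_eq_abs] using convex_univ.norm_image_sub_le_of_norm_deriv_le
    (fun x _ => hf x) (fun x _ => hC x) (Set.mem_univ x) (Set.mem_univ y)

lemma abs_le_of_abs_deriv_le_of_one_le_abs {f : ℝ → ℝ} {C : ℝ} (hf : Differentiable ℝ f)
    (hC : ∀ x, |deriv f x| ≤ C) (hf0 : ∀ u, 1 ≤ |u| → f u = 0) (u : ℝ) : |f u| ≤ C := by
  have hC0 : 0 ≤ C := (abs_nonneg _).trans (hC 0)
  by_cases hu : 1 ≤ |u|
  · rw [hf0 u hu, abs_zero]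
    exact hC0
  -- one of the zeros `±1` of `f` lies within distance `1` of `u`
  obtain ⟨e, he, hue⟩ : ∃ e : ℝ, 1 ≤ |e| ∧ |u - e| ≤ 1 := by
    have := abs_lt.mp (not_le.mp hu)
    rcases le_total 0 u with h | h
    · exact ⟨1, by norm_num, abs_le.mpr ⟨by linarith, by linarith⟩⟩
    · exact ⟨-1, by norm_num, abs_le.mpr ⟨by linarith, by linarith⟩⟩
  calc |f u| = |f u - f e| := by rw [hf0 e he, sub_zero]
    _ ≤ C * |u - e| := abs_sub_le_of_abs_deriv_le hf hC e u
    _ ≤ C := mul_le_of_le_one_right hC0 hue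

lemma iteratedDeriv_sum_mul_comp_mul_sub {ι : Type*} {g : ℝ → ℝ} {n : ℕ} (hg : ContDiff ℝ n g)
    (s : Finset ι) (z b : ι → ℝ) (c : ℝ) :
    iteratedDeriv n (fun t => ∑ j ∈ s, z j * g (c * t - b j)) =
      fun t => c ^ n * ∑ j ∈ s, z j * iteratedDeriv n g (c * t - b j) := by
  funext t
  have hcomp (j : ι) : iteratedDeriv n (fun t => g (c * t - b j)) =
      fun t => c ^ n * iteratedDeriv n g (c * t - b j) := by
    rw [iteratedDeriv_comp_const_mul (f := fun y => g (y - b j))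
      (hg.comp (contDiff_id.sub contDiff_const)) c, iteratedDeriv_comp_sub_const]
  rw [iteratedDeriv_fun_sum fun j _ => by fun_prop, Finset.mul_sum]
  refine Finset.sum_congr rfl fun j _ => ?_
  rw [iteratedDeriv_const_mul_field, hcomp]
  ring

lemma abs_sum_mul_comp_sub_le {ι : Type*} {g : ℝ → ℝ} {M δ : ℝ} {s : Finset ι} {z b : ι → ℝ}
    (hg0 : ∀ u, 1 ≤ |u| → g u = 0) (hM : ∀ u, |g u| ≤ M) (hδ : 0 ≤ δ)
    (hz : ∀ j ∈ s, |z j| ≤ δ) (hb : ∀ i ∈ s, ∀ j ∈ s, i ≠ j → 2 ≤ |b i - b j|) (x : ℝ) :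
    |∑ j ∈ s, z j * g (x - b j)| ≤ δ * M := by
  -- the windows `|x - b j| < 1` are pairwise disjoint, so at most one term is nonzero
  by_cases h : ∃ i ∈ s, |x - b i| < 1
  · obtain ⟨i, hi, hxi⟩ := h
    rw [Finset.sum_eq_single_of_mem i hi fun j hj hji => ?_, abs_mul]
    · exact mul_le_mul (hz i hi) (hM _) (abs_nonneg _) hδ
    · have hbij := hb i hi j hj hji.symm
      have htri := abs_sub_le (b i) x (b j)
      rw [abs_sub_comm] at hxi
      rw [hg0 _ (by linarith), mul_zero]
  · push Not at h
    rw [Finset.sum_eq_zero fun j hj => by rw [hg0 _ (h j hj), mul_zero], abs_zero]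
    exact mul_nonneg hδ ((abs_nonneg _).trans (hM 0))

lemma two_le_abs_sub_of_ne {i j : ℕ} (h : i ≠ j) :
    2 ≤ |(2 * (i : ℝ) - 1) - (2 * j - 1)| := by
  have hij : (1 : ℝ) ≤ |(i : ℝ) - j| := by
    exact_mod_cast Int.one_le_abs (sub_ne_zero.mpr (Nat.cast_injective.ne h : (i : ℤ) ≠ j))
  calc (2 : ℝ) ≤ |2| * |(i : ℝ) - j| := by rw [abs_two]; linarith
    _ = _ := by rw [← abs_mul]; ring_nf

lemma le_mul_rpow_of_le_mul_of_le {x K y α : ℝ} (hK : 0 ≤ K) (hy : 0 ≤ y) (hα0 : 0 ≤ α)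
    (hα1 : α ≤ 1) (hxy : x ≤ K * y) (hx : x ≤ K) : x ≤ K * y ^ α := by
  rcases le_total y 1 with h | h
  · exact hxy.trans (mul_le_mul_of_nonneg_left (Real.self_le_rpow_of_le_one hy h hα1) hK)
  · exact hx.trans (le_mul_of_one_le_right hK (Real.one_le_rpow h hα0))

lemma abs_iteratedDeriv_sum_mul_comp_mul_sub_le {ι : Type*} {g : ℝ → ℝ} {n : ℕ} {M δ c : ℝ}
    {s : Finset ι} {z b : ι → ℝ} (hg : ContDiff ℝ n g) (hg0 : ∀ u, 1 ≤ |u| → g u = 0)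
    (hM : ∀ u, |iteratedDeriv n g u| ≤ M) (hc : 0 ≤ c) (hδ : 0 ≤ δ)
    (hz : ∀ j ∈ s, |z j| ≤ δ) (hb : ∀ i ∈ s, ∀ j ∈ s, i ≠ j → 2 ≤ |b i - b j|) (t : ℝ) :
    |iteratedDeriv n (fun t => ∑ j ∈ s, z j * g (c * t - b j)) t| ≤ c ^ n * (δ * M) := by
  rw [iteratedDeriv_sum_mul_comp_mul_sub hg, abs_mul, abs_of_nonneg (pow_nonneg hc n)]
  exact mul_le_mul_of_nonneg_left (abs_sum_mul_comp_sub_le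
    (fun u hu => iteratedDeriv_eq_zero_of_one_le_abs hg hg0 hu) hM hδ hz hb _) (pow_nonneg hc n)

lemma abs_sub_le_mul_rpow_of_abs_le_of_abs_deriv_le {F : ℝ → ℝ} {B c α : ℝ}
    (hF : Differentiable ℝ F) (hB : ∀ u, |F u| ≤ B) (hF' : ∀ u, |deriv F u| ≤ 2 * B * c)
    (hc : 0 ≤ c) (hα0 : 0 ≤ α) (hα1 : α ≤ 1) (s t : ℝ) :
    |F t - F s| ≤ 2 * B * (c * |t - s|) ^ α := by
  have hB0 : 0 ≤ B := (abs_nonneg _).trans (hB 0)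
  refine le_mul_rpow_of_le_mul_of_le (by positivity) (by positivity) hα0 hα1 ?_ ?_
  · exact (abs_sub_le_of_abs_deriv_le hF hF' s t).trans_eq (by ring)
  · exact (abs_sub _ _).trans ((add_le_add (hB t) (hB s)).trans_eq (by ring))

theorem stmt10_general (k : ℕ) (α : ℝ) (hα0 : 0 ≤ α) (hα1 : α < 1)
    (V : ℝ → ℝ) (hV : ContDiff ℝ (k + 1) V)
    (hV0 : ∀ u : ℝ, 1 ≤ |u| → V u = 0)
    (Vstar : ℝ)
    (hVstar : Vstar = sSup ((fun a => |iteratedDeriv (k + 1) V a|) '' Set.Icc (-1 : ℝ) 1))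
    (m : ℕ) (hm : 1 ≤ m) (h : ℝ) (hh : h = 1 / (2 * m))
    (a : ℕ → ℝ) (ha : ∀ j : ℕ, a j = (2 * (j : ℝ) - 1) / (2 * m))
    (δ : ℝ) (hδ : 0 < δ) (z : ℕ → ℝ) (hz : ∀ j, |z j| ≤ δ)
    (Sz : ℝ → ℝ)
    (hSz : ∀ t : ℝ, Sz t = ∑ j ∈ Finset.Icc 1 m, z j * V ((t - a j) / h))
    (s t : ℝ) :
    |iteratedDeriv k Sz t - iteratedDeriv k Sz s| ≤
      (2 : ℝ) ^ (2 + k) * δ * Vstar * (m : ℝ) ^ ((k : ℝ) + α) * |t - s| ^ α := by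
  have hm0 : (0 : ℝ) < m := by exact_mod_cast hm
  have hSz' : Sz = fun t => ∑ j ∈ Icc 1 m, z j * V (2 * m * t - (2 * j - 1)) := by
    funext t
    rw [hSz]
    refine sum_congr rfl fun j _ => ?_
    rw [hh, ha]
    field_simp
  have hVk1 : ∀ u, |iteratedDeriv (k + 1) V u| ≤ Vstar := hVstar ▸
    abs_le_sSup_image_Icc (hV.continuous_iteratedDeriv _ le_rfl)
      fun u hu => iteratedDeriv_eq_zero_of_one_le_abs hV hV0 hu
  have hVk : ∀ u, |iteratedDeriv k V u| ≤ Vstar :=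
    abs_le_of_abs_deriv_le_of_one_le_abs
      (hV.differentiable_iteratedDeriv k (by norm_cast; omega))
      (by simpa only [← iteratedDeriv_succ] using hVk1)
      fun u hu => iteratedDeriv_eq_zero_of_one_le_abs (hV.of_le (by norm_cast; omega)) hV0 hu
  have hVstar0 : 0 ≤ Vstar := (abs_nonneg _).trans (hVk 0)
  have hbound (n : ℕ) (hn : n ≤ k + 1) (hVn : ∀ u, |iteratedDeriv n V u| ≤ Vstar) (u : ℝ) :
      |iteratedDeriv n Sz u| ≤ (2 * m) ^ n * (δ * Vstar) := hSz' ▸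
    abs_iteratedDeriv_sum_mul_comp_mul_sub_le (hV.of_le (by exact_mod_cast hn)) hV0 hVn
      (by positivity) hδ.le (fun j _ => hz j) (fun i _ j _ => two_le_abs_sub_of_ne) u
  have hdiff : Differentiable ℝ (iteratedDeriv k Sz) := by
    refine ContDiff.differentiable_iteratedDeriv (n := k + 1) k ?_ (by norm_cast; omega)
    rw [hSz']
    fun_prop
  calc |iteratedDeriv k Sz t - iteratedDeriv k Sz s|
      ≤ 2 * ((2 * m) ^ k * (δ * Vstar)) * (m * |t - s|) ^ α :=
        abs_sub_le_mul_rpow_of_abs_le_of_abs_deriv_le hdiff (hbound k k.le_succ hVk)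
          (fun u => by
            rw [← iteratedDeriv_succ]
            exact (hbound (k + 1) le_rfl hVk1 u).trans_eq (by ring))
          hm0.le hα0 hα1.le s t
    _ = 2 ^ (k + 1) * δ * Vstar * (m : ℝ) ^ ((k : ℝ) + α) * |t - s| ^ α := by
        rw [Real.mul_rpow hm0.le (abs_nonneg _), Real.rpow_add hm0, Real.rpow_natCast]
        ring
    _ ≤ 2 ^ (2 + k) * δ * Vstar * (m : ℝ) ^ ((k : ℝ) + α) * |t - s| ^ α := by
        gcongr (2 : ℝ) ^ ?_ * _ * _ * _ * _
        · norm_num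
        · omega

/-- Hölder smoothness of the parametric family `S_z(t) = Σ_j z_j V((t−a_j)/h)`:
under the stated conditions, for all `s, t ∈ [0,1]`,
`|S_z^{(k)}(t) − S_z^{(k)}(s)| ≤ 2^{2+k} δ V* m^{k+α} |t−s|^α`. -/
theorem stmt10 (k : ℕ) (α : ℝ) (hα0 : 0 ≤ α) (hα1 : α < 1)
    (V : ℝ → ℝ) (hV : ContDiff ℝ (k + 1) V)
    (hV0 : ∀ u : ℝ, 1 ≤ |u| → V u = 0)
    (Vstar : ℝ)
    (hVstar : Vstar = sSup ((fun a => |iteratedDeriv (k + 1) V a|) '' Set.Icc (-1 : ℝ) 1))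
    (m : ℕ) (hm : 1 ≤ m) (h : ℝ) (hh : h = 1 / (2 * m))
    (a : ℕ → ℝ) (ha : ∀ j : ℕ, a j = (2 * (j : ℝ) - 1) / (2 * m))
    (δ : ℝ) (hδ : 0 < δ) (z : ℕ → ℝ) (hz : ∀ j, |z j| ≤ δ)
    (Sz : ℝ → ℝ)
    (hSz : ∀ t : ℝ, Sz t = ∑ j ∈ Finset.Icc 1 m, z j * V ((t - a j) / h))
    (s t : ℝ) (hs : s ∈ Set.Icc (0 : ℝ) 1) (ht : t ∈ Set.Icc (0 : ℝ) 1) :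
    |iteratedDeriv k Sz t - iteratedDeriv k Sz s| ≤
      (2 : ℝ) ^ (2 + k) * δ * Vstar * (m : ℝ) ^ ((k : ℝ) + α) * |t - s| ^ α :=
  stmt10_general k α hα0 hα1 V hV hV0 Vstar hVstar m hm h hh a ha δ hδ z hz Sz hSz s t
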